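/- Let $G$ be a finite group and $H \subseteq G$ a subgroup containing $\operatorname{soc}^{ab}(G)$. Then $\operatorname{rank}_{\mathbb{Z}H}(\operatorname{soc}^{ab}(H)) \geq \operatorname{rank}_{\mathbb{Z}G}(\operatorname{soc}^{ab}(G))$. -/
import Mathlib


/-- A foot of `G` is a minimal nontrivial normal subgroup. -/
def IsFoot {G : Type} [Group G] (N : Subgroup G) : Prop :=
  N.Normal ∧ N ≠ ⊥ ∧ ∀ M : Subgroup G, M.Normal → M ≠ ⊥ → M ≤ N → M = N

/-- The abelian socle of `G`: the subgroup generated by all abelian feet. -/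
def abSocle (G : Type) [Group G] : Subgroup G :=
  ⨆ N ∈ {N : Subgroup G | IsFoot N ∧ ∀ a ∈ N, ∀ b ∈ N, a * b = b * a}, N

/-- The minimal number of generators of the abelian socle as a `ℤG`-module:
the least cardinality of a subset of `soc^ab(G)` whose normal closure is `soc^ab(G)`. -/
noncomputable def zgRankAbSocle (G : Type) [Group G] : ℕ :=
  sInf {r : ℕ | ∃ S : Finset G, ↑S ⊆ (abSocle G : Set G) ∧ S.card = r ∧
    Subgroup.normalClosure (↑S : Set G) = abSocle G}

section Aux

variable {Γ : Type} [Group Γ]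

lemma biSup_normal (s : Set (Subgroup Γ)) (h : ∀ N ∈ s, N.Normal) :
    (⨆ N ∈ s, N).Normal := by
  constructor
  intro n hn g
  rw [iSup_subtype'] at hn ⊢
  refine Subgroup.iSup_induction (C := fun x => g * x * g⁻¹ ∈ ⨆ N : s, (N : Subgroup Γ))
    _ hn ?_ ?_ ?_
  · intro N x hx
    exact le_iSup (fun N : s => (N : Subgroup Γ)) N ((h N N.2).conj_mem x hx g)
  · simpa using (⨆ N : s, (N : Subgroup Γ)).one_mem
  · intro x y hx hy
    have hxy : g * (x * y) * g⁻¹ = (g * x * g⁻¹) * (g * y * g⁻¹) := by group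
    rw [hxy]; exact mul_mem hx hy

lemma abSocle_normal (Γ : Type) [Group Γ] : (abSocle Γ).Normal :=
  biSup_normal _ (fun _ hN => hN.1.1)

lemma feet_elem_comm {A B : Subgroup Γ} (hA : IsFoot A)
    (hcA : ∀ a ∈ A, ∀ b ∈ A, a * b = b * a)
    (hB : IsFoot B) (hcB : ∀ a ∈ B, ∀ b ∈ B, a * b = b * a)
    {a b : Γ} (ha : a ∈ A) (hb : b ∈ B) : a * b = b * a := by
  by_cases hAB : A = B
  · exact hcB a (hAB ▸ ha) b hb
  · have hbot : A ⊓ B = ⊥ := by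
      by_contra h
      haveI := hA.1; haveI := hB.1
      have h1 : A ⊓ B = A := hA.2.2 _ inferInstance h inf_le_left
      have h2 : A ≤ B := h1 ▸ inf_le_right
      exact hAB (hB.2.2 A hA.1 hA.2.1 h2)
    have hcomm : a * b * a⁻¹ * b⁻¹ ∈ A ⊓ B := by
      refine Subgroup.mem_inf.mpr ⟨?_, ?_⟩
      · have h1 : b * a⁻¹ * b⁻¹ ∈ A := hA.1.conj_mem a⁻¹ (A.inv_mem ha) b
        have h2 : a * b * a⁻¹ * b⁻¹ = a * (b * a⁻¹ * b⁻¹) := by group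
        rw [h2]; exact mul_mem ha h1
      · have h1 : a * b * a⁻¹ ∈ B := hB.1.conj_mem b hb a
        exact mul_mem h1 (inv_mem hb)
    rw [hbot, Subgroup.mem_bot] at hcomm
    have h2 : a * b = (a * b * a⁻¹ * b⁻¹) * (b * a) := by group
    rw [hcomm, one_mul] at h2
    exact h2

lemma abSocle_comm (Γ : Type) [Group Γ] :
    ∀ a ∈ abSocle Γ, ∀ b ∈ abSocle Γ, a * b = b * a := by
  have habs : abSocle Γ =
      ⨆ N ∈ {N : Subgroup Γ | IsFoot N ∧ ∀ a ∈ N, ∀ b ∈ N, a * b = b * a}, N := rfl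
  have h1 : ∀ A ∈ {N : Subgroup Γ | IsFoot N ∧ ∀ a ∈ N, ∀ b ∈ N, a * b = b * a},
      abSocle Γ ≤ Subgroup.centralizer (A : Set Γ) := by
    intro A hA
    rw [habs]
    refine iSup_le fun B => iSup_le fun hB => fun b hb => ?_
    exact Subgroup.mem_centralizer_iff.mpr fun a ha =>
      feet_elem_comm hA.1 hA.2 hB.1 hB.2 ha hb
  have h2 : abSocle Γ ≤ Subgroup.centralizer ((abSocle Γ : Subgroup Γ) : Set Γ) := by
    conv_lhs => rw [habs]
    refine iSup_le fun B => iSup_le fun hB => fun b hb => ?_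
    refine Subgroup.mem_centralizer_iff.mpr fun a ha => ?_
    have := Subgroup.mem_centralizer_iff.mp (h1 B hB ha) b hb
    exact this.symm
  intro a ha b hb
  exact Subgroup.mem_centralizer_iff.mp (h2 hb) a ha

lemma exists_foot_le {Γ : Type} [Group Γ] [Finite Γ] {K : Subgroup Γ} (hK : K.Normal)
    (hKbot : K ≠ ⊥) : ∃ B : Subgroup Γ, IsFoot B ∧ B ≤ K := by
  classical
  have hne : {n : ℕ | ∃ B : Subgroup Γ, B.Normal ∧ B ≤ K ∧ B ≠ ⊥ ∧ Nat.card B = n}.Nonempty :=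
    ⟨Nat.card K, K, hK, le_rfl, hKbot, rfl⟩
  obtain ⟨B, hBn, hBK, hBbot, hBcard⟩ := Nat.sInf_mem hne
  refine ⟨B, ⟨hBn, hBbot, ?_⟩, hBK⟩
  intro M hMn hMbot hMB
  have h1 : Nat.card B ≤ Nat.card M := by
    rw [hBcard]
    exact Nat.sInf_le ⟨M, hMn, hMB.trans hBK, hMbot, rfl⟩
  exact Subgroup.eq_of_le_of_card_ge hMB h1

lemma exists_compl {Γ : Type} [Group Γ] [Finite Γ] {K : Subgroup Γ} (hKn : K.Normal)
    (hKC : K ≤ abSocle Γ) :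
    ∃ K' : Subgroup Γ, K'.Normal ∧ K' ≤ abSocle Γ ∧ K ⊓ K' = ⊥ ∧ K ⊔ K' = abSocle Γ := by
  classical
  haveI := hKn
  have habs : abSocle Γ =
      ⨆ N ∈ {N : Subgroup Γ | IsFoot N ∧ ∀ a ∈ N, ∀ b ∈ N, a * b = b * a}, N := rfl
  set s : Set ℕ := {n : ℕ | ∃ K' : Subgroup Γ, K'.Normal ∧ K' ≤ abSocle Γ ∧ K ⊓ K' = ⊥ ∧
    Nat.card K' = n} with hs
  have hne : s.Nonempty := ⟨Nat.card (⊥ : Subgroup Γ), ⊥, inferInstance, bot_le,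
    (inf_bot_eq K), rfl⟩
  have hbdd : BddAbove s := by
    refine ⟨Nat.card Γ, fun n hn => ?_⟩
    obtain ⟨K', _, _, _, hcard⟩ := hn
    rw [← hcard]
    exact Subgroup.card_le_card_group K'
  obtain ⟨K', hK'n, hK'C, hKK', hK'card⟩ := Nat.sSup_mem hne hbdd
  haveI := hK'n
  refine ⟨K', hK'n, hK'C, hKK', ?_⟩
  have hfeet : ∀ A ∈ {N : Subgroup Γ | IsFoot N ∧ ∀ a ∈ N, ∀ b ∈ N, a * b = b * a},
      A ≤ K ⊔ K' := by
    intro A hA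
    haveI := hA.1.1
    by_contra hnle
    have hAC : A ≤ abSocle Γ := by
      rw [habs]
      exact le_iSup_of_le A (le_iSup_of_le hA le_rfl)
    have hinter : A ⊓ (K ⊔ K') = ⊥ := by
      by_contra h
      have h1 : A ⊓ (K ⊔ K') = A := hA.1.2.2 _ inferInstance h inf_le_left
      exact hnle (h1 ▸ inf_le_right)
    have hKint : K ⊓ (K' ⊔ A) = ⊥ := by
      rw [eq_bot_iff]
      intro x hx0
      obtain ⟨hxK, hxKA⟩ := Subgroup.mem_inf.mp hx0
      have hx : (x : Γ) ∈ ((K' ⊔ A : Subgroup Γ) : Set Γ) := hxKA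
      rw [Subgroup.mul_normal K' A] at hx
      obtain ⟨k', hk', a, ha, hxeq0⟩ := hx
      have hxeq : k' * a = x := hxeq0
      have haA : a ∈ A ⊓ (K ⊔ K') := by
        refine Subgroup.mem_inf.mpr ⟨ha, ?_⟩
        have h3 : a = k'⁻¹ * x := by rw [← hxeq]; group
        rw [h3]
        exact mul_mem (Subgroup.mem_sup_right (K'.inv_mem hk')) (Subgroup.mem_sup_left hxK)
      rw [hinter, Subgroup.mem_bot] at haA
      rw [haA, mul_one] at hxeq
      have hk'K : k' ∈ K ⊓ K' := Subgroup.mem_inf.mpr ⟨hxeq ▸ hxK, hk'⟩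
      rw [hKK', Subgroup.mem_bot] at hk'K
      rw [Subgroup.mem_bot, ← hxeq]
      exact hk'K
    have hmem : Nat.card (K' ⊔ A : Subgroup Γ) ∈ s :=
      ⟨K' ⊔ A, inferInstance, sup_le hK'C hAC, hKint, rfl⟩
    have hle : Nat.card (K' ⊔ A : Subgroup Γ) ≤ Nat.card K' := by
      rw [hK'card]
      exact le_csSup hbdd hmem
    have heq : K' = K' ⊔ A := Subgroup.eq_of_le_of_card_ge le_sup_left hle
    have hAK' : A ≤ K' := heq ▸ le_sup_right
    exact hnle (hAK'.trans le_sup_right)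
  refine le_antisymm (sup_le hKC hK'C) ?_
  rw [habs]
  exact iSup_le fun A => iSup_le fun hA => hfeet A hA

end Aux

/-- If `H ⊆ G` contains `soc^ab(G)`, then
`rank_{ℤH}(soc^ab(H)) ≥ rank_{ℤG}(soc^ab(G))`. -/
theorem zgRank_abSocle_le_of_subgroup (G : Type) [Group G] [Finite G]
    (H : Subgroup G) (hH : abSocle G ≤ H) :
    zgRankAbSocle ↥H ≥ zgRankAbSocle G := by
  classical
  haveI hWn : (abSocle ↥H).Normal := abSocle_normal ↥H
  haveI hVn : (abSocle G).Normal := abSocle_normal G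
  -- the defining set for `zgRankAbSocle ↥H` is nonempty
  have hHset : {r : ℕ | ∃ S : Finset ↥H, ↑S ⊆ (abSocle ↥H : Set ↥H) ∧ S.card = r ∧
      Subgroup.normalClosure (↑S : Set ↥H) = abSocle ↥H}.Nonempty := by
    refine ⟨((abSocle ↥H : Set ↥H).toFinite.toFinset).card,
      (abSocle ↥H : Set ↥H).toFinite.toFinset, ?_, rfl, ?_⟩
    · rw [Set.Finite.coe_toFinset]
    · rw [Set.Finite.coe_toFinset]
      exact Subgroup.normalClosure_eq_self _
  have hmem : zgRankAbSocle ↥H ∈ {r : ℕ | ∃ S : Finset ↥H, ↑S ⊆ (abSocle ↥H : Set ↥H) ∧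
      S.card = r ∧ Subgroup.normalClosure (↑S : Set ↥H) = abSocle ↥H} := Nat.sInf_mem hHset
  obtain ⟨S, hSsub, hScard, hSclos⟩ := hmem
  -- V as a subgroup of H
  set VH : Subgroup ↥H := (abSocle G).subgroupOf H with hVH
  haveI hVHn : VH.Normal := hVn.subgroupOf H
  -- the H-socle of V
  set U : Subgroup ↥H := ⨆ B ∈ {B : Subgroup ↥H | IsFoot B ∧ B ≤ VH}, B with hU
  haveI hUn : U.Normal := biSup_normal _ (fun _ hN => hN.1.1)
  have hUle : U ≤ VH := iSup_le fun B => iSup_le fun hB => hB.2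
  have hVHcomm : ∀ a ∈ VH, ∀ b ∈ VH, a * b = b * a := by
    intro a ha b hb
    have h1 : (a : G) * b = b * a :=
      abSocle_comm G _ (Subgroup.mem_subgroupOf.mp ha) _ (Subgroup.mem_subgroupOf.mp hb)
    exact Subtype.ext h1
  have hUW : U ≤ abSocle ↥H := by
    refine iSup_le fun B => iSup_le fun hB => ?_
    have habel : ∀ a ∈ B, ∀ b ∈ B, a * b = b * a := fun a ha b hb =>
      hVHcomm a (hB.2 ha) b (hB.2 hb)
    exact le_iSup_of_le B (le_iSup_of_le ⟨hB.1, habel⟩ le_rfl)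
  -- complement of U inside abSocle ↥H
  obtain ⟨U', hU'n, hU'W, hUU', hUsup⟩ := exists_compl hUn hUW
  haveI := hU'n
  -- split the generators of abSocle ↥H along U ⊕ U'
  have hdecomp : ∀ t ∈ S, ∃ u, u ∈ U ∧ ∃ u', u' ∈ U' ∧ u * u' = t := by
    intro t ht
    have h1 : (t : ↥H) ∈ ((U ⊔ U' : Subgroup ↥H) : Set ↥H) := by
      rw [hUsup]; exact hSsub ht
    rw [Subgroup.mul_normal U U'] at h1
    obtain ⟨u, hu, u', hu', heq⟩ := h1
    exact ⟨u, hu, u', hu', heq⟩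
  choose! f hf using hdecomp
  set T'' : Finset ↥H := S.image f with hT''
  have hT''U : (↑T'' : Set ↥H) ⊆ (U : Set ↥H) := by
    intro x hx
    rw [hT''] at hx
    obtain ⟨t, ht, rfl⟩ := Finset.mem_coe.mp hx |> Finset.mem_image.mp
    exact (hf t ht).1
  set N : Subgroup ↥H := Subgroup.normalClosure (↑T'' : Set ↥H) with hN
  have hNU : N ≤ U := Subgroup.normalClosure_le_normal hT''U
  haveI : N.Normal := Subgroup.normalClosure_normal
  have hWNU' : abSocle ↥H ≤ N ⊔ U' := by
    rw [← hSclos]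
    refine Subgroup.normalClosure_le_normal ?_
    intro t ht
    obtain ⟨hftU, u', hu', heq⟩ := hf t (Finset.mem_coe.mp ht)
    have hfN : f t ∈ N := Subgroup.subset_normalClosure
      (Finset.mem_coe.mpr (Finset.mem_image_of_mem f (Finset.mem_coe.mp ht)))
    have : (t : ↥H) ∈ N ⊔ U' := by
      rw [← heq]
      exact mul_mem (Subgroup.mem_sup_left hfN) (Subgroup.mem_sup_right hu')
    exact this
  have hUN : U ≤ N := by
    intro x hx
    have hxW : x ∈ abSocle ↥H := hUW hx
    have h1 : (x : ↥H) ∈ ((N ⊔ U' : Subgroup ↥H) : Set ↥H) := hWNU' hxW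
    rw [Subgroup.mul_normal N U'] at h1
    obtain ⟨n, hn, u', hu', heq0⟩ := h1
    have heq : n * u' = x := heq0
    have hu'U : u' ∈ U := by
      have h3 : u' = n⁻¹ * x := by rw [← heq]; group
      rw [h3]
      exact mul_mem (inv_mem (hNU hn)) hx
    have h4 : u' ∈ U ⊓ U' := ⟨hu'U, hu'⟩
    rw [hUU', Subgroup.mem_bot] at h4
    rw [h4, mul_one] at heq
    exact heq ▸ hn
  -- transfer to G
  set T : Finset G := T''.image (fun x : ↥H => (x : G)) with hT
  have hTsub : (↑T : Set G) ⊆ (abSocle G : Set G) := by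
    intro x hx
    rw [hT] at hx
    obtain ⟨t, ht, rfl⟩ := Finset.mem_coe.mp hx |> Finset.mem_image.mp
    exact Subgroup.mem_subgroupOf.mp (hUle (hT''U ht))
  set M : Subgroup G := Subgroup.normalClosure (↑T : Set G) with hM
  haveI hMn : M.Normal := Subgroup.normalClosure_normal
  have hMV : M ≤ abSocle G := Subgroup.normalClosure_le_normal hTsub
  have hUM : ∀ x : ↥H, x ∈ U → (x : G) ∈ M := by
    have hcl : N ≤ Subgroup.comap H.subtype M := by
      haveI : (Subgroup.comap H.subtype M).Normal := hMn.comap H.subtype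
      refine Subgroup.normalClosure_le_normal ?_
      intro x hx
      refine Subgroup.mem_comap.mpr ?_
      refine Subgroup.subset_normalClosure ?_
      rw [hT]
      exact Finset.mem_coe.mpr (Finset.mem_image_of_mem _ (Finset.mem_coe.mp hx))
    intro x hx
    exact Subgroup.mem_comap.mp (hcl (hUN hx))
  -- complement of M inside abSocle G
  obtain ⟨M', hM'n, hM'V, hMM', hMsup⟩ := exists_compl hMn hMV
  haveI := hM'n
  have hM'bot : M' = ⊥ := by
    by_contra hM'ne
    have hM'H : M' ≤ H := hM'V.trans hH
    have hM'Hne : M'.subgroupOf H ≠ ⊥ := by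
      obtain ⟨x, hxne⟩ := Subgroup.ne_bot_iff_exists_ne_one.mp hM'ne
      intro hbot
      have hx' : (⟨(x : G), hM'H x.2⟩ : ↥H) ∈ M'.subgroupOf H := by
        exact Subgroup.mem_subgroupOf.mpr x.2
      rw [hbot, Subgroup.mem_bot] at hx'
      have hxg : (x : G) = 1 := congrArg Subtype.val hx'
      exact hxne (Subtype.ext hxg)
    obtain ⟨B, hBfoot, hBle⟩ := exists_foot_le (inferInstance : (M'.subgroupOf H).Normal) hM'Hne
    have hBVH : B ≤ VH := fun x hx =>
      Subgroup.mem_subgroupOf.mpr (hM'V (Subgroup.mem_subgroupOf.mp (hBle hx)))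
    have hBU : B ≤ U := le_iSup_of_le B (le_iSup_of_le ⟨hBfoot, hBVH⟩ le_rfl)
    obtain ⟨b, hbne⟩ := Subgroup.ne_bot_iff_exists_ne_one.mp hBfoot.2.1
    have hbM : ((b : ↥H) : G) ∈ M := hUM b (hBU b.2)
    have hbM' : ((b : ↥H) : G) ∈ M' := Subgroup.mem_subgroupOf.mp (hBle b.2)
    have : ((b : ↥H) : G) ∈ M ⊓ M' := ⟨hbM, hbM'⟩
    rw [hMM', Subgroup.mem_bot] at this
    exact hbne (Subtype.ext (Subtype.ext this))
  have hMeq : Subgroup.normalClosure (↑T : Set G) = abSocle G := by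
    rw [← hM]
    rw [hM'bot, sup_bot_eq] at hMsup
    exact hMsup
  have hG_le : zgRankAbSocle G ≤ T.card :=
    Nat.sInf_le ⟨T, hTsub, rfl, hMeq⟩
  have hcard : T.card ≤ zgRankAbSocle ↥H := by
    rw [← hScard, hT, hT'']
    exact (Finset.card_image_le).trans Finset.card_image_le
  exact hG_le.trans hcard
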